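/- arXiv:1905.01526 — 6 statements merged into one kernel-verified Lean document; each statement's English description precedes it below -/
import Mathlib

section
/- For real numbers x_{1,b}, x_{2,b} ≥ 0 indexed by a finite set B with at least 2 elements, satisfying x_{1,b} + x_{2,b} ≤ 1 for each b, the following inequality holds: ∏_{b∈B}(1 - x_{1,b} - x_{2,b}) + ∑_{b∈B} x_{2,b} ∏_{b'≠b}(1 - x_{1,b'} - x_{2,b'}) ≤ ∏_{b∈B}(1 - x_{1,b}) · [∏_{b∈B}(1 - x_{2,b}) + ∑_{b∈B} x_{2,b} ∏_{b'≠b}(1 - x_{2,b'})]. -/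
/-!
With `E_B(q, y) = atMostOne B q y`, the claim is
`E_B(1 - x₁ - x₂, x₂) ≤ ∏_B (1 - x₁) · E_B(1 - x₂, x₂)`. Adding a new index `a` gives
`E_{B ∪ a}(q, y) = q_a E_B(q, y) + y_a ∏_B q`, and with `α = x_{1,a}`, `γ = x_{2,a}` the
difference of the two sides after the step is
`(1-α)(1-γ)·(old difference) + γ(1-α)·(∏(1-x₁)∏(1-x₂) - ∏(1-x₁-x₂)) + αγ·(E_B - ∏_B q)`,
a sum of nonnegative terms; so the inequality follows by induction on `B`.
-/

open Finset

section AtMostOne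

variable {ι R : Type*} [DecidableEq ι] [CommSemiring R]

def atMostOne (B : Finset ι) (q y : ι → R) : R :=
  ∏ b ∈ B, q b + ∑ b ∈ B, y b * ∏ b' ∈ B.erase b, q b'

@[simp]
theorem atMostOne_empty (q y : ι → R) : atMostOne ∅ q y = 1 := by
  simp [atMostOne]

theorem atMostOne_insert {B : Finset ι} {a : ι} (ha : a ∉ B) (q y : ι → R) :
    atMostOne (insert a B) q y = q a * atMostOne B q y + y a * ∏ b ∈ B, q b := by
  have hsum : ∑ b ∈ B, y b * ∏ b' ∈ (insert a B).erase b, q b' =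
      q a * ∑ b ∈ B, y b * ∏ b' ∈ B.erase b, q b' := by
    rw [mul_sum]
    refine sum_congr rfl fun b hb => ?_
    have hab : a ≠ b := fun h => ha (h ▸ hb)
    rw [erase_insert_of_ne hab, prod_insert fun h => ha (mem_of_mem_erase h)]
    ring
  rw [atMostOne, atMostOne, prod_insert ha, sum_insert ha, erase_insert ha, hsum]
  ring

end AtMostOne

theorem prod_le_atMostOne {ι : Type*} [DecidableEq ι] {B : Finset ι} {q y : ι → ℝ}
    (hq : ∀ b ∈ B, 0 ≤ q b) (hy : ∀ b ∈ B, 0 ≤ y b) :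
    ∏ b ∈ B, q b ≤ atMostOne B q y :=
  le_add_of_nonneg_right <| sum_nonneg fun b hb =>
    mul_nonneg (hy b hb) (prod_nonneg fun b' hb' => hq b' (mem_of_mem_erase hb'))

theorem prod_one_sub_add_le_prod_mul_prod {ι : Type*} {B : Finset ι} {x1 x2 : ι → ℝ}
    (h1 : ∀ b ∈ B, 0 ≤ x1 b) (h2 : ∀ b ∈ B, 0 ≤ x2 b) (hsum : ∀ b ∈ B, x1 b + x2 b ≤ 1) :
    ∏ b ∈ B, (1 - x1 b - x2 b) ≤ (∏ b ∈ B, (1 - x1 b)) * ∏ b ∈ B, (1 - x2 b) := by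
  rw [← prod_mul_distrib]
  refine prod_le_prod (fun b hb => by linarith [hsum b hb]) fun b hb => ?_
  nlinarith [mul_nonneg (h1 b hb) (h2 b hb)]

theorem atMostOne_induction_step {α γ A P Q L R : ℝ} (hα : 0 ≤ α) (hγ : 0 ≤ γ)
    (hαγ : α + γ ≤ 1) (hPQ : P ≤ A * Q) (hPL : P ≤ L) (hLR : L ≤ A * R) :
    (1 - α - γ) * L + γ * P ≤ (1 - α) * A * ((1 - γ) * R + γ * Q) := by
  have h1α : 0 ≤ 1 - α := by linarith
  have h1γ : 0 ≤ 1 - γ := by linarith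
  nlinarith [mul_nonneg (mul_nonneg h1α h1γ) (sub_nonneg.2 hLR),
    mul_nonneg (mul_nonneg hγ h1α) (sub_nonneg.2 hPQ),
    mul_nonneg (mul_nonneg hα hγ) (sub_nonneg.2 hPL)]

theorem atMostOne_le_prod_mul_atMostOne {ι : Type*} [DecidableEq ι] (B : Finset ι)
    (x1 x2 : ι → ℝ) (h1 : ∀ b ∈ B, 0 ≤ x1 b) (h2 : ∀ b ∈ B, 0 ≤ x2 b)
    (hsum : ∀ b ∈ B, x1 b + x2 b ≤ 1) :
    atMostOne B (fun b => 1 - x1 b - x2 b) x2 ≤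
      (∏ b ∈ B, (1 - x1 b)) * atMostOne B (fun b => 1 - x2 b) x2 := by
  induction B using Finset.induction_on with
  | empty => simp
  | @insert a S ha ih =>
    simp only [mem_insert, forall_eq_or_imp] at h1 h2 hsum
    rw [atMostOne_insert ha, atMostOne_insert ha, prod_insert ha]
    exact atMostOne_induction_step h1.1 h2.1 hsum.1
      (prod_one_sub_add_le_prod_mul_prod h1.2 h2.2 hsum.2)
      (prod_le_atMostOne (fun b hb => by linarith [hsum.2 b hb, h1.2 b hb]) h2.2)
      (ih h1.2 h2.2 hsum.2)

theorem stmt0_general {ι : Type*} [DecidableEq ι] (B : Finset ι)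
    (x1 x2 : ι → ℝ)
    (h1 : ∀ b ∈ B, 0 ≤ x1 b) (h2 : ∀ b ∈ B, 0 ≤ x2 b)
    (hsum : ∀ b ∈ B, x1 b + x2 b ≤ 1) :
    (∏ b ∈ B, (1 - x1 b - x2 b)) +
      ∑ b ∈ B, x2 b * ∏ b' ∈ B.erase b, (1 - x1 b' - x2 b') ≤
    (∏ b ∈ B, (1 - x1 b)) *
      ((∏ b ∈ B, (1 - x2 b)) +
        ∑ b ∈ B, x2 b * ∏ b' ∈ B.erase b, (1 - x2 b')) :=
  atMostOne_le_prod_mul_atMostOne B x1 x2 h1 h2 hsum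

theorem stmt0 {ι : Type*} [DecidableEq ι] (B : Finset ι) (hB : 2 ≤ B.card)
    (x1 x2 : ι → ℝ)
    (h1 : ∀ b ∈ B, 0 ≤ x1 b) (h2 : ∀ b ∈ B, 0 ≤ x2 b)
    (hsum : ∀ b ∈ B, x1 b + x2 b ≤ 1) :
    (∏ b ∈ B, (1 - x1 b - x2 b)) +
      ∑ b ∈ B, x2 b * ∏ b' ∈ B.erase b, (1 - x1 b' - x2 b') ≤
    (∏ b ∈ B, (1 - x1 b)) *
      ((∏ b ∈ B, (1 - x2 b)) +
        ∑ b ∈ B, x2 b * ∏ b' ∈ B.erase b, (1 - x2 b')) :=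
  stmt0_general B x1 x2 h1 h2 hsum
end

section
/- Let B be a finite set with |B| ≥ 2 and let x_{1,b}, x_{2,b} ≥ 0 with x_{1,b}+x_{2,b} ≤ 1 for all b ∈ B. Fix an element b̂ ∈ B and a partition (B₁, B₂) of B with b̂ ∈ B₂. Define Φ(B₁,B₂) = ∏_{b∈B₁}(1-x_{1,b})(1-x_{2,b}) · ∏_{b∈B₂}(1-x_{1,b}-x_{2,b}) + ∑_{b∈B₁∪B₂} x_{2,b} · [∏_{b'∈B₁, b'≠b}(1-x_{1,b'})(1-x_{2,b'}) · ∏_{b'∈B₂, b'≠b}(1-x_{1,b'}-x_{2,b'})]. Then Φ(B₁, B₂) ≤ Φ(B₁ ∪ {b̂}, B₂ \ {b̂}). -/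
/-!
Moving `bhat` from `B₂` to `B₁` replaces the factor `1 - x₁ - x₂` by the larger factor
`(1 - x₁)(1 - x₂)` in the leading product and in every summand (except the summand of `bhat`
itself, where the factor is absent on both sides). All other factors are nonnegative, so `Φ`
increases term by term.
-/

open Finset

section ProductExchange

variable {ι R : Type*} [DecidableEq ι] [CommSemiring R] [PartialOrder R] [IsOrderedRing R]
  {f g : ι → R} {S T : Finset ι} {a : ι}

theorem prod_mul_prod_le_prod_insert_mul_prod_erase (haS : a ∉ S) (haT : a ∈ T)
    (hf : ∀ b ∈ S, 0 ≤ f b) (hg : ∀ b ∈ T, 0 ≤ g b) (hgf : g a ≤ f a) :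
    (∏ b ∈ S, f b) * ∏ b ∈ T, g b ≤ (∏ b ∈ insert a S, f b) * ∏ b ∈ T.erase a, g b := by
  have hPQ : 0 ≤ (∏ b ∈ S, f b) * ∏ b ∈ T.erase a, g b :=
    mul_nonneg (prod_nonneg hf) (prod_nonneg fun b hb => hg b (mem_of_mem_erase hb))
  rw [prod_insert haS, ← mul_prod_erase T g haT]
  calc (∏ b ∈ S, f b) * (g a * ∏ b ∈ T.erase a, g b)
      = g a * ((∏ b ∈ S, f b) * ∏ b ∈ T.erase a, g b) := by ring
    _ ≤ f a * ((∏ b ∈ S, f b) * ∏ b ∈ T.erase a, g b) := mul_le_mul_of_nonneg_right hgf hPQ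
    _ = (f a * ∏ b ∈ S, f b) * ∏ b ∈ T.erase a, g b := by ring

theorem prod_erase_mul_prod_erase_le_of_move (haS : a ∉ S) (haT : a ∈ T)
    (hf : ∀ b ∈ S, 0 ≤ f b) (hg : ∀ b ∈ T, 0 ≤ g b) (hgf : g a ≤ f a) (c : ι) :
    (∏ b ∈ S.erase c, f b) * ∏ b ∈ T.erase c, g b ≤
      (∏ b ∈ (insert a S).erase c, f b) * ∏ b ∈ (T.erase a).erase c, g b := by
  by_cases hca : c = a
  · subst hca
    rw [erase_insert haS, erase_idem, erase_eq_of_notMem haS]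
  · rw [erase_insert_of_ne (Ne.symm hca), erase_right_comm]
    exact prod_mul_prod_le_prod_insert_mul_prod_erase (fun h => haS (mem_of_mem_erase h))
      (mem_erase.mpr ⟨Ne.symm hca, haT⟩) (fun b hb => hf b (mem_of_mem_erase hb))
      (fun b hb => hg b (mem_of_mem_erase hb)) hgf

end ProductExchange

theorem insert_union_erase_of_mem {ι : Type*} [DecidableEq ι] {S T : Finset ι} {a : ι}
    (ha : a ∈ T) : insert a S ∪ T.erase a = S ∪ T := by
  rw [insert_union, ← union_insert, insert_erase ha]

theorem stmt1_general {ι : Type*} [DecidableEq ι] (B B1 B2 : Finset ι)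
    (x1 x2 : ι → ℝ) (hdisj : Disjoint B1 B2) (hunion : B1 ∪ B2 = B)
    (h1 : ∀ b ∈ B, 0 ≤ x1 b) (h2 : ∀ b ∈ B, 0 ≤ x2 b)
    (hsum : ∀ b ∈ B, x1 b + x2 b ≤ 1)
    (bhat : ι) (hbhat : bhat ∈ B2)
    (Φ : Finset ι → Finset ι → ℝ)
    (hΦ : ∀ S1 S2 : Finset ι, Φ S1 S2 =
      (∏ b ∈ S1, (1 - x1 b) * (1 - x2 b)) * (∏ b ∈ S2, (1 - x1 b - x2 b)) +
      ∑ b ∈ S1 ∪ S2, x2 b *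
        ((∏ b' ∈ S1.erase b, (1 - x1 b') * (1 - x2 b')) *
         (∏ b' ∈ S2.erase b, (1 - x1 b' - x2 b')))) :
    Φ B1 B2 ≤ Φ (insert bhat B1) (B2.erase bhat) := by
  have hB1 : ∀ b ∈ B1, b ∈ B := fun b hb => hunion ▸ mem_union_left B2 hb
  have hB2 : ∀ b ∈ B2, b ∈ B := fun b hb => hunion ▸ mem_union_right B1 hb
  have hbhat_notMem : bhat ∉ B1 := disjoint_right.mp hdisj hbhat
  have hf : ∀ b ∈ B1, 0 ≤ (1 - x1 b) * (1 - x2 b) := fun b hb =>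
    mul_nonneg (by linarith [hsum b (hB1 b hb), h2 b (hB1 b hb)])
      (by linarith [hsum b (hB1 b hb), h1 b (hB1 b hb)])
  have hg : ∀ b ∈ B2, 0 ≤ 1 - x1 b - x2 b := fun b hb => by linarith [hsum b (hB2 b hb)]
  -- the two weights differ by `x1 * x2 ≥ 0`
  have hgf : 1 - x1 bhat - x2 bhat ≤ (1 - x1 bhat) * (1 - x2 bhat) := by
    nlinarith [mul_nonneg (h1 bhat (hB2 bhat hbhat)) (h2 bhat (hB2 bhat hbhat))]
  rw [hΦ, hΦ, insert_union_erase_of_mem hbhat]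
  gcongr ?_ + ∑ b ∈ _, ?_ with b hb
  · exact prod_mul_prod_le_prod_insert_mul_prod_erase hbhat_notMem hbhat hf hg hgf
  · exact mul_le_mul_of_nonneg_left
      (prod_erase_mul_prod_erase_le_of_move hbhat_notMem hbhat hf hg hgf b)
      (h2 b (hunion ▸ hb))

theorem stmt1 {ι : Type*} [DecidableEq ι] (B B1 B2 : Finset ι)
    (x1 x2 : ι → ℝ) (hdisj : Disjoint B1 B2) (hunion : B1 ∪ B2 = B)
    (hB : 2 ≤ B.card)
    (h1 : ∀ b ∈ B, 0 ≤ x1 b) (h2 : ∀ b ∈ B, 0 ≤ x2 b)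
    (hsum : ∀ b ∈ B, x1 b + x2 b ≤ 1)
    (bhat : ι) (hbhat : bhat ∈ B2)
    (Φ : Finset ι → Finset ι → ℝ)
    (hΦ : ∀ S1 S2 : Finset ι, Φ S1 S2 =
      (∏ b ∈ S1, (1 - x1 b) * (1 - x2 b)) * (∏ b ∈ S2, (1 - x1 b - x2 b)) +
      ∑ b ∈ S1 ∪ S2, x2 b *
        ((∏ b' ∈ S1.erase b, (1 - x1 b') * (1 - x2 b')) *
         (∏ b' ∈ S2.erase b, (1 - x1 b' - x2 b')))) :
    Φ B1 B2 ≤ Φ (insert bhat B1) (B2.erase bhat) :=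
  stmt1_general B B1 B2 x1 x2 hdisj hunion h1 h2 hsum bhat hbhat Φ hΦ
end

section
/- For every θ ∈ [0,1] and every integer k ≥ 2, the quantity G₁(θ,k) := e^{θ-1} · (1 - 2θ/k)^{k-1} · (1 - 2θ/k + 2θ) satisfies G₁(θ,k) ≤ 2(√2 - 1) e^{√2 - 2}. -/
set_option maxHeartbeats 2000000

open Real

lemma exp_ge_quartic {x : ℝ} (hx : 0 ≤ x) :
    1 + x + x^2/2 + x^3/6 + x^4/24 ≤ Real.exp x := by
  have h := Real.sum_le_exp_of_nonneg hx 5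
  simp [Finset.sum_range_succ, Nat.factorial] at h
  nlinarith [h]

lemma exp_le_quad {w : ℝ} (hw : |w| ≤ 1/4) :
    Real.exp w ≤ 1 + w + (5/9) * w^2 := by
  have h1 : |w| ≤ 1 := hw.trans (by norm_num)
  have h := Real.exp_bound h1 (n := 3) (by norm_num)
  simp [Finset.sum_range_succ, Nat.factorial] at h
  have h2 := abs_le.mp h
  have h5 : |w|^3 = |w| * w^2 := by
    rw [pow_succ, sq_abs]; ring
  nlinarith [sq_nonneg w, abs_nonneg w, le_abs_self w, h2.2, hw, h5,
    mul_le_mul_of_nonneg_right hw (sq_nonneg w)]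

lemma step1 {x : ℝ} (h0 : 0 ≤ x) (h23 : x ≤ 2/3) :
    1 - x ≤ Real.exp (-(x + x^2/2 + 3/10*x^3)) := by
  set t := x + x^2/2 + 3/10*x^3 with ht
  have ht0 : 0 ≤ t := by positivity
  have ht1 : t ≤ 44/45 := by nlinarith [sq_nonneg x, pow_le_pow_left₀ h0 h23 2, pow_le_pow_left₀ h0 h23 3]
  have habs : |(-t)| ≤ 1 := by rw [abs_neg, abs_of_nonneg ht0]; exact ht1.trans (by norm_num)
  have h := Real.exp_bound habs (n := 5) (by norm_num)
  simp [Finset.sum_range_succ, Nat.factorial] at h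
  have h2 := (abs_le.mp h).1
  have habs5 : |t|^5 = t^5 := by
    rw [abs_of_nonneg ht0]
  rw [habs5] at h2
  have hx1 : x ≤ 1 := h23.trans (by norm_num)
  have e3 : x^3 ≤ x^2 := pow_le_pow_of_le_one h0 hx1 (by norm_num)
  have e4 : x^4 ≤ x^2 := pow_le_pow_of_le_one h0 hx1 (by norm_num)
  have e5 : x^5 ≤ x^2 := pow_le_pow_of_le_one h0 hx1 (by norm_num)
  have e6 : x^6 ≤ x^2 := pow_le_pow_of_le_one h0 hx1 (by norm_num)
  have e7 : x^7 ≤ x^2 := pow_le_pow_of_le_one h0 hx1 (by norm_num)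
  have e8 : x^8 ≤ x^2 := pow_le_pow_of_le_one h0 hx1 (by norm_num)
  have e9 : x^9 ≤ x^2 := pow_le_pow_of_le_one h0 hx1 (by norm_num)
  have e10 : x^10 ≤ x^2 := pow_le_pow_of_le_one h0 hx1 (by norm_num)
  have e11 : x^11 ≤ x^2 := pow_le_pow_of_le_one h0 hx1 (by norm_num)
  have e12 : x^12 ≤ x^2 := pow_le_pow_of_le_one h0 hx1 (by norm_num)
  have hQ : (0:ℝ) ≤ (1/30) + (13/60)*x^1 - (31/600)*x^2 - (23/600)*x^3 - (2/75)*x^4 - (23/9600)*x^5 - (83/8000)*x^6 - (179/16000)*x^7 - (651/80000)*x^8 - (279/80000)*x^9 - (27/25000)*x^10 - (81/400000)*x^11 - (243/10000000)*x^12 := by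
    have hx2 : x^2 ≤ (2/3)*x := by nlinarith
    linarith [e3, e4, e5, e6, e7, e8, e9, e10, e11, e12, hx2, h0]
  have key : 1 - x ≤ 1 - t + t^2/2 - t^3/6 + t^4/24 - t^5 * (6/(120*5)) := by
    have expand : (1 - t + t^2/2 - t^3/6 + t^4/24 - t^5 * (6/(120*5))) - (1 - x) = x^3 * ((1/30) + (13/60)*x^1 - (31/600)*x^2 - (23/600)*x^3 - (2/75)*x^4 - (23/9600)*x^5 - (83/8000)*x^6 - (179/16000)*x^7 - (651/80000)*x^8 - (279/80000)*x^9 - (27/25000)*x^10 - (81/400000)*x^11 - (243/10000000)*x^12) := by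
      rw [ht]; ring
    nlinarith [mul_nonneg (pow_nonneg h0 3) hQ, expand]
  nlinarith [h2, key]

lemma mainpoly (θ x : ℝ) (h0 : 0 ≤ θ) (h1 : θ ≤ 1) (hx0 : 0 ≤ x) (hx : 3*x ≤ 2*θ) :
    (1+2*θ-x)*(1+(x-(2*θ-x)*(x/2+3/10*x^2))+(5/9)*(x-(2*θ-x)*(x/2+3/10*x^2))^2)
      ≤ (6267/5000)*(1+θ+θ^2/2+θ^3/6+θ^4/24) := by
  have hb : 0 ≤ 2*θ - 3*x := by linarith
  have h1' : 0 ≤ 1 - θ := by linarith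
  nlinarith [mul_nonneg hb hx0, mul_nonneg hb h1', mul_nonneg (mul_nonneg hb hx0) hx0, mul_nonneg (mul_nonneg hb hx0) h1', sq_nonneg (θ - 11/25), sq_nonneg (x - 3/10), mul_nonneg (sq_nonneg (θ - 11/25)) h1', mul_nonneg (sq_nonneg (θ - 11/25)) hx0, mul_nonneg (mul_nonneg hx0 hx0) h1', mul_nonneg (mul_nonneg (mul_nonneg hx0 hx0) hx0) hx0]

lemma const_bound : (6267/5000 : ℝ) ≤ 2*(Real.sqrt 2 - 1)*Real.exp (Real.sqrt 2 - 1) := by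
  have hs2 := Real.sq_sqrt (by norm_num : (0:ℝ) ≤ 2)
  have hsn := Real.sqrt_nonneg 2
  have hs1 : (1.4142:ℝ) ≤ Real.sqrt 2 := by nlinarith
  have hle : Real.sqrt 2 ≤ 1.5 := by nlinarith
  have h0 : (0:ℝ) ≤ Real.sqrt 2 - 1 := by linarith
  have h := exp_ge_quartic h0
  nlinarith [h, Real.exp_pos (Real.sqrt 2 - 1)]

theorem stmt3 (θ : ℝ) (hθ : θ ∈ Set.Icc (0:ℝ) 1) (k : ℕ) (hk : 2 ≤ k) :
    Real.exp (θ - 1) * (1 - 2*θ/k)^(k-1) * (1 - 2*θ/k + 2*θ) ≤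
      2 * (Real.sqrt 2 - 1) * Real.exp (Real.sqrt 2 - 2) := by
  obtain ⟨h0, h1⟩ := hθ
  have hs2 := Real.sq_sqrt (by norm_num : (0:ℝ) ≤ 2)
  have hsn := Real.sqrt_nonneg 2
  have hs1 : (1:ℝ) ≤ Real.sqrt 2 := by nlinarith
  rcases eq_or_lt_of_le hk with h2 | hk3
  · -- k = 2
    subst h2
    have hd : 2*θ/((2:ℕ):ℝ) = θ := by norm_num
    rw [hd]
    have key1 : (1-θ)^(2-1)*(1-θ+2*θ) ≤ 2*(Real.sqrt 2 - 1)*(1+(Real.sqrt 2 - 1)-θ) := by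
      norm_num
      nlinarith [sq_nonneg (θ - (Real.sqrt 2 - 1))]
    have key2 : (1+(Real.sqrt 2 - 1)-θ) ≤ Real.exp (Real.sqrt 2 - 1 - θ) := by
      have := Real.add_one_le_exp (Real.sqrt 2 - 1 - θ)
      linarith
    have hc0 : (0:ℝ) ≤ 2*(Real.sqrt 2 - 1) := by linarith
    have hep := Real.exp_pos (θ-1)
    calc Real.exp (θ-1) * (1-θ)^(2-1) * (1-θ+2*θ)
        = Real.exp (θ-1) * ((1-θ)^(2-1) * (1-θ+2*θ)) := by ring
      _ ≤ Real.exp (θ-1) * (2*(Real.sqrt 2 - 1)*(1+(Real.sqrt 2 - 1)-θ)) := by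
          exact mul_le_mul_of_nonneg_left key1 hep.le
      _ ≤ Real.exp (θ-1) * (2*(Real.sqrt 2 - 1)*Real.exp (Real.sqrt 2 - 1 - θ)) := by
          apply mul_le_mul_of_nonneg_left _ hep.le
          exact mul_le_mul_of_nonneg_left key2 hc0
      _ = 2 * (Real.sqrt 2 - 1) * (Real.exp (θ-1) * Real.exp (Real.sqrt 2 - 1 - θ)) := by ring
      _ = 2 * (Real.sqrt 2 - 1) * Real.exp (Real.sqrt 2 - 2) := by
          rw [← Real.exp_add]; ring_nf
  · -- k ≥ 3
    have hk3' : 3 ≤ k := hk3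
    have hK3 : (3:ℝ) ≤ (k:ℝ) := by exact_mod_cast hk3'
    have hKpos : (0:ℝ) < (k:ℝ) := by linarith
    set x := 2*θ/(k:ℝ) with hxdef
    have hKx : (k:ℝ) * x = 2*θ := by
      rw [hxdef]; field_simp [hKpos.ne']
    have hx0 : 0 ≤ x := by positivity
    have h3x : 3*x ≤ 2*θ := by
      calc 3*x ≤ (k:ℝ)*x := by apply mul_le_mul_of_nonneg_right hK3 hx0
        _ = 2*θ := hKx
    have hx23 : x ≤ 2/3 := by linarith
    have hxle : x ≤ 2*θ := by linarith [mul_nonneg hx0 hx0]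
    have hcast : ((k-1:ℕ):ℝ) = (k:ℝ) - 1 := by
      have : 1 ≤ k := by omega
      push_cast [Nat.cast_sub this]
      ring
    set w := x-(2*θ-x)*(x/2+3/10*x^2) with hwdef
    -- |w| ≤ 1/4
    have hwabs : |w| ≤ 1/4 := by
      rw [abs_le]
      constructor
      · rw [hwdef]
        nlinarith [mul_nonneg hx0 (sub_nonneg.mpr h1), mul_nonneg (mul_nonneg hx0 hx0) (sub_nonneg.mpr h1),
          mul_nonneg (mul_nonneg hx0 hx0) hx0, sq_nonneg x]
      · rw [hwdef]
        nlinarith [sq_nonneg (x - 1/2), mul_nonneg (mul_nonneg hx0 hx0) hx0,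
          mul_nonneg (mul_nonneg hx0 hx0) (by linarith : 0 ≤ 2*θ - 3*x)]
    -- Step A: pow bound
    have hpow : (1 - x)^(k-1) ≤ Real.exp (((k:ℝ)-1) * (-(x + x^2/2 + 3/10*x^3))) := by
      have hb := step1 hx0 hx23
      have h1x : (0:ℝ) ≤ 1 - x := by linarith
      calc (1 - x)^(k-1) ≤ (Real.exp (-(x + x^2/2 + 3/10*x^3)))^(k-1) :=
            pow_le_pow_left₀ h1x hb (k-1)
        _ = Real.exp (((k-1:ℕ):ℝ) * (-(x + x^2/2 + 3/10*x^3))) := by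
            rw [← Real.exp_nat_mul]
        _ = Real.exp (((k:ℝ)-1) * (-(x + x^2/2 + 3/10*x^3))) := by rw [hcast]
    have hexpid : ((k:ℝ)-1) * (-(x + x^2/2 + 3/10*x^3)) = -(2*θ-x)*(1+x/2+3/10*x^2) := by
      linear_combination (-(1+x/2+3/10*x^2)) * hKx
    have hlin0 : (0:ℝ) ≤ 1 - 2*θ/(k:ℝ) + 2*θ := by
      have : (1:ℝ) - x ≥ 1 - 2/3 := by linarith
      have h2t : (0:ℝ) ≤ 2*θ := by linarith
      simp only [← hxdef]
      linarith
    have hew := exp_le_quad hwabs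
    have hmp := mainpoly θ x h0 h1 hx0 h3x
    have hq := exp_ge_quartic h0
    have hcb := const_bound
    have hQpos : (0:ℝ) < 1+θ+θ^2/2+θ^3/6+θ^4/24 := by positivity
    -- assemble
    have step2 : Real.exp (θ - 1) * (1 - x)^(k-1) * (1 - x + 2*θ) ≤
        Real.exp (-1-θ) * (Real.exp w * (1 - x + 2*θ)) := by
      have e1 : Real.exp (θ-1) * Real.exp (((k:ℝ)-1) * (-(x + x^2/2 + 3/10*x^3)))
          = Real.exp (-1-θ) * Real.exp w := by
        rw [← Real.exp_add, ← Real.exp_add, hexpid, hwdef]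
        ring_nf
      have hlin0' : (0:ℝ) ≤ 1 - x + 2*θ := by
        simp only [hxdef] at *
        linarith [hlin0]
      calc Real.exp (θ - 1) * (1 - x)^(k-1) * (1 - x + 2*θ)
          ≤ Real.exp (θ - 1) * Real.exp (((k:ℝ)-1) * (-(x + x^2/2 + 3/10*x^3))) * (1 - x + 2*θ) := by
            apply mul_le_mul_of_nonneg_right _ hlin0'
            exact mul_le_mul_of_nonneg_left hpow (Real.exp_pos _).le
        _ = Real.exp (-1-θ) * (Real.exp w * (1 - x + 2*θ)) := by rw [e1]; ring
    have step3 : Real.exp w * (1 - x + 2*θ) ≤ (6267/5000)*(1+θ+θ^2/2+θ^3/6+θ^4/24) := by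
      have hlin0' : (0:ℝ) ≤ 1 - x + 2*θ := by
        simp only [hxdef] at *
        linarith [hlin0]
      calc Real.exp w * (1 - x + 2*θ) ≤ (1 + w + (5/9)*w^2) * (1 - x + 2*θ) :=
            mul_le_mul_of_nonneg_right hew hlin0'
        _ = (1+2*θ-x)*(1+(x-(2*θ-x)*(x/2+3/10*x^2))+(5/9)*(x-(2*θ-x)*(x/2+3/10*x^2))^2) := by
            rw [hwdef]; ring
        _ ≤ (6267/5000)*(1+θ+θ^2/2+θ^3/6+θ^4/24) := hmp
    have step4 : ((6267:ℝ)/5000)*(1+θ+θ^2/2+θ^3/6+θ^4/24) ≤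
        2*(Real.sqrt 2 - 1)*Real.exp (Real.sqrt 2 - 1) * Real.exp θ := by
      calc ((6267:ℝ)/5000)*(1+θ+θ^2/2+θ^3/6+θ^4/24)
          ≤ 2*(Real.sqrt 2 - 1)*Real.exp (Real.sqrt 2 - 1) * (1+θ+θ^2/2+θ^3/6+θ^4/24) :=
            mul_le_mul_of_nonneg_right hcb hQpos.le
        _ ≤ 2*(Real.sqrt 2 - 1)*Real.exp (Real.sqrt 2 - 1) * Real.exp θ := by
            apply mul_le_mul_of_nonneg_left hq
            positivity
    have final : Real.exp (θ - 1) * (1 - x)^(k-1) * (1 - x + 2*θ) ≤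
        2 * (Real.sqrt 2 - 1) * Real.exp (Real.sqrt 2 - 2) := by
      calc Real.exp (θ - 1) * (1 - x)^(k-1) * (1 - x + 2*θ)
          ≤ Real.exp (-1-θ) * (Real.exp w * (1 - x + 2*θ)) := step2
        _ ≤ Real.exp (-1-θ) * ((6267/5000)*(1+θ+θ^2/2+θ^3/6+θ^4/24)) :=
            mul_le_mul_of_nonneg_left step3 (Real.exp_pos _).le
        _ ≤ Real.exp (-1-θ) * (2*(Real.sqrt 2 - 1)*Real.exp (Real.sqrt 2 - 1) * Real.exp θ) :=
            mul_le_mul_of_nonneg_left step4 (Real.exp_pos _).le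
        _ = 2 * (Real.sqrt 2 - 1) * (Real.exp (-1-θ) * Real.exp (Real.sqrt 2 - 1) * Real.exp θ) := by
            ring
        _ = 2 * (Real.sqrt 2 - 1) * Real.exp (Real.sqrt 2 - 2) := by
            rw [← Real.exp_add, ← Real.exp_add]; ring_nf
    calc Real.exp (θ - 1) * (1 - 2*θ/(k:ℝ))^(k-1) * (1 - 2*θ/(k:ℝ) + 2*θ)
        = Real.exp (θ - 1) * (1 - x)^(k-1) * (1 - x + 2*θ) := by rw [← hxdef]
      _ ≤ 2 * (Real.sqrt 2 - 1) * Real.exp (Real.sqrt 2 - 2) := final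
end

section
/- For every θ ∈ [0,1] and every integer k ≥ 2, the quantity G₂(θ,k) := e^{θ-1} · [(1-θ/k)^k + θ(1-θ)(1-θ/k)^{k-1}] satisfies G₂(θ,k) ≤ 5/(4e) < 0.46. -/
/-!
Put `s = θ / k`, so that `exp θ = (exp s)^k`. The truncated series
`exp s ≤ 1 + s + s²/2 + 2s³/9` gives `exp s * (1 - s) ≤ 1 - a` with
`a = s² (1/2 + 5s/18 + 2s²/9)`, and `(1 - a)^k ≤ 1 / (1 + k a)`. Hence
`exp θ * [(1 - s)^k + θ(1 - θ)(1 - s)^(k-1)] ≤ (1 - s + θ(1 - θ)) / ((1 - s)(1 + k a))`,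
which is at most `5/4` by a polynomial inequality in `s` and `θ` valid for `0 ≤ 2s ≤ θ ≤ 1`;
at `s = 0` it is `1 + θ(1 - θ) ≤ 5/4`.
-/

open Real

lemma one_sub_pow_mul_one_add_mul_le_one {a : ℝ} (h₀ : -1 ≤ a) (h₁ : a ≤ 1) (k : ℕ) :
    (1 - a) ^ k * (1 + k * a) ≤ 1 :=
  calc (1 - a) ^ k * (1 + k * a) ≤ (1 - a) ^ k * (1 + a) ^ k :=
        mul_le_mul_of_nonneg_left (one_add_mul_le_pow (by linarith) k)
          (pow_nonneg (by linarith) k)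
    _ = (1 - a ^ 2) ^ k := by rw [← mul_pow]; ring
    _ ≤ 1 := pow_le_one₀ (by nlinarith) (by nlinarith)

lemma exp_le_cubic {s : ℝ} (h₀ : 0 ≤ s) (h₁ : s ≤ 1) :
    exp s ≤ 1 + s + s ^ 2 / 2 + 2 / 9 * s ^ 3 := by
  have h := exp_bound' h₀ h₁ (n := 3) (by norm_num)
  norm_num [Finset.sum_range_succ, Nat.factorial] at h
  linarith

lemma exp_mul_one_sub_le {s : ℝ} (h₀ : 0 ≤ s) (h₁ : s ≤ 1) :
    exp s * (1 - s) ≤ 1 - s ^ 2 * (1 / 2 + 5 / 18 * s + 2 / 9 * s ^ 2) :=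
  calc exp s * (1 - s) ≤ (1 + s + s ^ 2 / 2 + 2 / 9 * s ^ 3) * (1 - s) :=
        mul_le_mul_of_nonneg_right (exp_le_cubic h₀ h₁) (by linarith)
    _ = 1 - s ^ 2 * (1 / 2 + 5 / 18 * s + 2 / 9 * s ^ 2) := by ring

lemma four_mul_one_sub_add_le {s θ : ℝ} (hs : 0 ≤ s) (hsθ : 2 * s ≤ θ) (hθ : θ ≤ 1) :
    4 * (1 - s + θ * (1 - θ)) ≤
      5 * (1 - s) * (1 + θ * s * (1 / 2 + 5 / 18 * s + 2 / 9 * s ^ 2)) := by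
  have ht : 0 ≤ θ - 2 * s := by linarith
  have hv : 0 ≤ 1 - θ := by linarith
  nlinarith [mul_nonneg hs ht, mul_nonneg (mul_nonneg hs ht) ht,
    mul_nonneg (sq_nonneg (2 * θ - 1)) hv, mul_nonneg (sq_nonneg (2 * θ - 1 + s)) hs,
    sq_nonneg (2 * θ - 1 + s)]

lemma exp_mul_pow_add_le {θ : ℝ} (h₀ : 0 ≤ θ) (h₁ : θ ≤ 1) {k : ℕ} (hk : 2 ≤ k) :
    exp θ * ((1 - θ / k) ^ k + θ * (1 - θ) * (1 - θ / k) ^ (k - 1)) ≤ 5 / 4 := by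
  have hk' : (2 : ℝ) ≤ k := by exact_mod_cast hk
  set s := θ / k with hs_def
  have hks : k * s = θ := by rw [hs_def]; field_simp
  have hs₀ : 0 ≤ s := by positivity
  have hsθ : 2 * s ≤ θ := by nlinarith
  set a := s ^ 2 * (1 / 2 + 5 / 18 * s + 2 / 9 * s ^ 2)
  have ha₀ : 0 ≤ a := by positivity
  have hka : k * a = θ * s * (1 / 2 + 5 / 18 * s + 2 / 9 * s ^ 2) := by rw [← hks]; ring
  have hs₁ : s ≤ 1 / 2 := by linarith
  have ha₁ : a ≤ 1 := mul_le_one₀ (by nlinarith) (by positivity) (by nlinarith)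
  have hpow : (exp s * (1 - s)) ^ k ≤ (1 - a) ^ k :=
    pow_le_pow_left₀ (mul_nonneg (exp_pos s).le (by linarith))
      (exp_mul_one_sub_le hs₀ (by linarith)) k
  have hfactor : (1 - s) * (exp θ * ((1 - s) ^ k + θ * (1 - θ) * (1 - s) ^ (k - 1)))
      = (exp s * (1 - s)) ^ k * (1 - s + θ * (1 - θ)) := by
    have hexp : exp θ = exp s ^ k := by rw [← exp_nat_mul, hks]
    have hsplit : (1 - s) ^ k = (1 - s) ^ (k - 1) * (1 - s) := by
      rw [← pow_succ, Nat.sub_add_cancel (by omega)]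
    rw [hexp, mul_pow, hsplit]
    ring
  have hpoly := four_mul_one_sub_add_le hs₀ hsθ h₁
  rw [← hka] at hpoly
  have hnum : 0 ≤ 1 - s + θ * (1 - θ) := by nlinarith
  refine le_of_mul_le_mul_left ?_ (by linarith : 0 < 1 - s)
  calc (1 - s) * (exp θ * ((1 - s) ^ k + θ * (1 - θ) * (1 - s) ^ (k - 1)))
      = (exp s * (1 - s)) ^ k * (1 - s + θ * (1 - θ)) := hfactor
    _ ≤ (1 - a) ^ k * (1 - s + θ * (1 - θ)) := mul_le_mul_of_nonneg_right hpow hnum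
    _ ≤ (1 - a) ^ k * (5 / 4 * (1 - s) * (1 + k * a)) :=
        mul_le_mul_of_nonneg_left (by linarith) (pow_nonneg (by linarith) k)
    _ = 5 / 4 * (1 - s) * ((1 - a) ^ k * (1 + k * a)) := by ring
    _ ≤ 5 / 4 * (1 - s) :=
        mul_le_of_le_one_right (by linarith)
          (one_sub_pow_mul_one_add_mul_le_one (by linarith) ha₁ k)
    _ = (1 - s) * (5 / 4) := mul_comm _ _

theorem stmt5 (θ : ℝ) (hθ : θ ∈ Set.Icc (0:ℝ) 1) (k : ℕ) (hk : 2 ≤ k) :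
    Real.exp (θ - 1) * ((1 - θ/k)^k + θ*(1-θ)*(1 - θ/k)^(k-1)) ≤ 5/(4*Real.exp 1)
    ∧ 5/(4*Real.exp 1) < 0.46 := by
  have he : (2.7182818283 : ℝ) < exp 1 := exp_one_gt_d9
  constructor
  · rw [exp_sub, div_mul_eq_mul_div, div_mul_eq_div_div, div_le_div_iff_of_pos_right (exp_pos 1)]
    exact exp_mul_pow_add_le hθ.1 hθ.2 hk
  · rw [div_lt_iff₀ (by positivity)]
    linarith
end

section
/- The maximum of U(θ) := (2θ+1)/(e^{θ+1}(1 - θ/20)) over θ ∈ [0,1] is attained at θ = (39 - √1353)/4 and this maximum value is strictly less than 0.459. -/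
open Real

set_option maxHeartbeats 1000000 in
theorem stmt10 :
    ((39 - Real.sqrt 1353)/4 ∈ Set.Icc (0:ℝ) 1) ∧
    IsMaxOn (fun θ : ℝ => (2*θ + 1)/(Real.exp (θ + 1) * (1 - θ/20)))
      (Set.Icc 0 1) ((39 - Real.sqrt 1353)/4) ∧
    (2*((39 - Real.sqrt 1353)/4) + 1) /
      (Real.exp ((39 - Real.sqrt 1353)/4 + 1) * (1 - ((39 - Real.sqrt 1353)/4)/20))
      < 0.459 := by
  set s : ℝ := Real.sqrt 1353 with hs
  have hs0 : 0 ≤ s := Real.sqrt_nonneg _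
  have hs2 : s ^ 2 = 1353 := Real.sq_sqrt (by norm_num)
  have hsl : (36.783 : ℝ) < s := by nlinarith
  have hsu : s < 36.784 := by nlinarith
  set c : ℝ := (39 - s)/4 with hc
  have hc1 : (0.554 : ℝ) ≤ c := by rw [hc]; nlinarith
  have hc2 : c ≤ 0.55425 := by rw [hc]; nlinarith
  have hrel : 2*c^2 - 39*c + 21 = 0 := by rw [hc]; nlinarith
  have hmem : c ∈ Set.Icc (0:ℝ) 1 := ⟨by linarith, by linarith⟩
  refine ⟨hmem, ?_, ?_⟩
  · intro θ hθ
    obtain ⟨hθ0, hθ1⟩ := hθ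
    simp only [Set.mem_setOf_eq]
    have hθ20 : (0:ℝ) < 1 - θ/20 := by linarith
    have hc20 : (0:ℝ) < 1 - c/20 := by linarith
    have hdθ : 0 < Real.exp (θ + 1) * (1 - θ/20) := mul_pos (Real.exp_pos _) hθ20
    have hdc : 0 < Real.exp (c + 1) * (1 - c/20) := mul_pos (Real.exp_pos _) hc20
    rw [div_le_div_iff₀ hdθ hdc]
    have hexp : Real.exp (θ + 1) = Real.exp (c + 1) * Real.exp (θ - c) := by
      rw [← Real.exp_add]; ring_nf
    rw [hexp]
    have hE : (0:ℝ) < Real.exp (c+1) := Real.exp_pos _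
    rw [show (2*θ + 1) * (Real.exp (c + 1) * (1 - c / 20)) =
        Real.exp (c+1) * ((2*θ + 1) * (1 - c / 20)) by ring,
      show (2*c + 1) * (Real.exp (c + 1) * Real.exp (θ - c) * (1 - θ / 20)) =
        Real.exp (c+1) * ((2*c + 1) * (Real.exp (θ - c) * (1 - θ / 20))) by ring]
    refine mul_le_mul_of_nonneg_left ?_ hE.le
    set x : ℝ := θ - c with hx
    have hxb : |x| ≤ 1 := by
      rw [abs_le]; constructor
      · rw [hx]; linarith
      · rw [hx]; linarith
    have hb := Real.exp_bound hxb (n := 3) (by norm_num)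
    have hsum : ∑ m ∈ Finset.range 3, x ^ m / m.factorial = 1 + x + x^2/2 := by
      simp [Finset.sum_range_succ, Nat.factorial]
      try ring
    rw [hsum] at hb
    norm_num [Nat.factorial] at hb
    have h1 : |x| ≤ 14/25 := by
      rw [abs_le]; constructor
      · rw [hx]; linarith
      · rw [hx]; linarith
    have h2 : |x|^3 ≤ 14/25 * x^2 := by
      have h3 : |x|^3 = x^2 * |x| := by rw [pow_succ, sq_abs]
      nlinarith [sq_nonneg x, abs_nonneg x]
    have hElb : 1 + x + x^2/2 - (14/25) * x^2 * (2/9) ≤ Real.exp x := by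
      have h4 := abs_sub_le_iff.mp hb
      nlinarith [h4.1, h4.2]
    have key : (2*θ + 1) * (1 - c / 20) ≤
        (2*c + 1) * ((1 + x + x^2/2 - (14/25) * x^2 * (2/9)) * (1 - θ / 20)) := by
      have hfac : (2*c + 1) * ((1 + x + x^2/2 - (14/25) * x^2 * (2/9)) * (1 - θ / 20))
          - (2*θ + 1) * (1 - c / 20)
          = (θ-c)^2*(2*c+1)*(2930-169*θ)/9000 + (2*c^2-39*c+21)*(c-θ)/20 := by
        rw [hx]; ring
      have hQ : (0:ℝ) ≤ (θ-c)^2*(2*c+1)*(2930-169*θ)/9000 := by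
        have : (0:ℝ) ≤ 2930-169*θ := by linarith
        positivity
      have h5 : (2*c^2-39*c+21)*(c-θ)/20 = 0 := by rw [hrel]; ring
      linarith [hQ, hfac, h5]
    refine key.trans ?_
    have h2c : (0:ℝ) ≤ 2*c+1 := by linarith
    exact mul_le_mul_of_nonneg_left (mul_le_mul_of_nonneg_right hElb hθ20.le) h2c
  · have hc20 : (0:ℝ) < 1 - c/20 := by linarith
    rw [div_lt_iff₀ (mul_pos (Real.exp_pos _) hc20)]
    have hE1 : (2.17459 : ℝ) ≤ Real.exp 0.777 := by
      have h := Real.sum_le_exp_of_nonneg (x := 0.777) (by norm_num) 6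
      have h2 : (2.17459 : ℝ) ≤ ∑ i ∈ Finset.range 6, (0.777:ℝ) ^ i / i.factorial := by
        norm_num [Finset.sum_range_succ, Nat.factorial]
      linarith
    have hE2 : (4.7288 : ℝ) ≤ Real.exp 1.554 := by
      have h : Real.exp 1.554 = Real.exp 0.777 * Real.exp 0.777 := by
        rw [← Real.exp_add]; norm_num
      nlinarith [Real.exp_pos (0.777:ℝ)]
    have hE3 : Real.exp 1.554 ≤ Real.exp (c + 1) := Real.exp_le_exp.mpr (by linarith)
    have hE4 : (4.7288 : ℝ) ≤ Real.exp (c+1) := le_trans hE2 hE3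
    have hprod : (4.7288 : ℝ) * 0.9722875 ≤ Real.exp (c+1) * (1 - c/20) :=
      mul_le_mul hE4 (by linarith) (by norm_num) (Real.exp_pos _).le
    nlinarith [hprod]
end

section
/- For real numbers y_{1,b}, y_{2,b} ≥ 0 with y_{1,b} + y_{2,b} ≤ 1 indexed by a finite set B, the function G(y) := 1 - ∏_{b∈B}(1 - y_{1,b} - y_{2,b}) - ∑_{b∈B} y_{2,b} ∏_{b'≠b}(1 - y_{1,b'} - y_{2,b'}) is monotone nondecreasing in each coordinate y_{2,b}. -/
/-!
Write `f j = 1 - y1 j - y2 j` and split off the factor at `b`. With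
`P = ∏_{j ≠ b} f j` and `T = ∑_{i ≠ b} y2 i ∏_{j ≠ b, i} f j`, both independent of `y2 b`,
`∏ f + ∑ y2 i ∏_{j ≠ i} f j = (1 - y1 b) P + (1 - y1 b - y2 b) T`,
so the function is affine in `y2 b` with slope `T ≥ 0`.
-/

namespace Finset

variable {ι R : Type*} [DecidableEq ι]

theorem sum_mul_prod_erase_of_mem [CommSemiring R] {s : Finset ι} {b : ι} (hb : b ∈ s)
    (f g : ι → R) :
    ∑ i ∈ s, g i * ∏ j ∈ s.erase i, f j =
      g b * ∏ j ∈ s.erase b, f j +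
        f b * ∑ i ∈ s.erase b, g i * ∏ j ∈ (s.erase b).erase i, f j := by
  rw [← add_sum_erase s _ hb, mul_sum]
  congr 1
  refine sum_congr rfl fun i hi => ?_
  have hbi : b ∈ s.erase i := mem_erase.2 ⟨(ne_of_mem_erase hi).symm, hb⟩
  rw [← mul_prod_erase (s.erase i) f hbi, erase_right_comm]
  ring

theorem prod_add_sum_mul_prod_erase_of_mem [CommSemiring R] {s : Finset ι} {b : ι}
    (hb : b ∈ s) (f g : ι → R) :
    ∏ i ∈ s, f i + ∑ i ∈ s, g i * ∏ j ∈ s.erase i, f j =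
      (f b + g b) * ∏ j ∈ s.erase b, f j +
        f b * ∑ i ∈ s.erase b, g i * ∏ j ∈ (s.erase b).erase i, f j := by
  rw [sum_mul_prod_erase_of_mem hb, ← mul_prod_erase s f hb]
  ring

theorem sum_mul_prod_erase_nonneg [CommSemiring R] [PartialOrder R] [IsOrderedRing R]
    {s : Finset ι} {f g : ι → R} (hf : ∀ i ∈ s, 0 ≤ f i) (hg : ∀ i ∈ s, 0 ≤ g i) :
    0 ≤ ∑ i ∈ s, g i * ∏ j ∈ s.erase i, f j :=
  sum_nonneg fun i hi =>
    mul_nonneg (hg i hi) (prod_nonneg fun j hj => hf j (mem_of_mem_erase hj))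

end Finset

open Finset

theorem stmt13_general {ι : Type*} [DecidableEq ι] (B : Finset ι) (y1 y2 y2' : ι → ℝ)
    (b : ι) (hb : b ∈ B)
    (h2 : ∀ i ∈ B, 0 ≤ y2 i)
    (hs : ∀ i ∈ B, y1 i + y2 i ≤ 1)
    (heq : ∀ i ∈ B, i ≠ b → y2' i = y2 i) (hmono : y2 b ≤ y2' b) :
    1 - (∏ i ∈ B, (1 - y1 i - y2 i)) -
      ∑ i ∈ B, y2 i * ∏ j ∈ B.erase i, (1 - y1 j - y2 j) ≤
    1 - (∏ i ∈ B, (1 - y1 i - y2' i)) -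
      ∑ i ∈ B, y2' i * ∏ j ∈ B.erase i, (1 - y1 j - y2' j) := by
  set P := ∏ j ∈ B.erase b, (1 - y1 j - y2 j)
  set T := ∑ i ∈ B.erase b, y2 i * ∏ j ∈ (B.erase b).erase i, (1 - y1 j - y2 j)
  have split (z : ι → ℝ) (hz : ∀ i ∈ B.erase b, z i = y2 i) :
      ∏ i ∈ B, (1 - y1 i - z i) + ∑ i ∈ B, z i * ∏ j ∈ B.erase i, (1 - y1 j - z j) =
        (1 - y1 b) * P + (1 - y1 b - z b) * T := by
    rw [prod_add_sum_mul_prod_erase_of_mem hb]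
    have hP : ∏ j ∈ B.erase b, (1 - y1 j - z j) = P :=
      prod_congr rfl fun j hj => by rw [hz j hj]
    have hT : ∑ i ∈ B.erase b, z i * ∏ j ∈ (B.erase b).erase i, (1 - y1 j - z j) = T :=
      sum_congr rfl fun i hi => by
        rw [hz i hi, prod_congr rfl fun j hj => by rw [hz j (mem_of_mem_erase hj)]]
    rw [hP, hT]
    ring
  have hT : 0 ≤ T := sum_mul_prod_erase_nonneg
    (fun j hj => by linarith [hs j (mem_of_mem_erase hj)])
    (fun i hi => h2 i (mem_of_mem_erase hi))
  have hsplit := split y2 fun _ _ => rfl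
  have hsplit' := split y2' fun i hi => heq i (mem_of_mem_erase hi) (ne_of_mem_erase hi)
  linear_combination hsplit' - hsplit + mul_nonneg (sub_nonneg.2 hmono) hT

theorem stmt13 {ι : Type*} [DecidableEq ι] (B : Finset ι) (y1 y2 y2' : ι → ℝ)
    (b : ι) (hb : b ∈ B)
    (h1 : ∀ i ∈ B, 0 ≤ y1 i) (h2 : ∀ i ∈ B, 0 ≤ y2 i)
    (hs : ∀ i ∈ B, y1 i + y2 i ≤ 1)
    (h2' : ∀ i ∈ B, 0 ≤ y2' i) (hs' : ∀ i ∈ B, y1 i + y2' i ≤ 1)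
    (heq : ∀ i ∈ B, i ≠ b → y2' i = y2 i) (hmono : y2 b ≤ y2' b) :
    1 - (∏ i ∈ B, (1 - y1 i - y2 i)) -
      ∑ i ∈ B, y2 i * ∏ j ∈ B.erase i, (1 - y1 j - y2 j) ≤
    1 - (∏ i ∈ B, (1 - y1 i - y2' i)) -
      ∑ i ∈ B, y2' i * ∏ j ∈ B.erase i, (1 - y1 j - y2' j) :=
  stmt13_general B y1 y2 y2' b hb h2 hs heq hmono
end
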